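/- There exists a real number σ₂ such that the entire function f₂(s) has no zero in the left half-plane Re(s) < σ₂; that is, for all complex s with Re(s) < σ₂ one has f₂(s) ≠ 0. -/

import Mathlib

open Complex

noncomputable def chi (s : ℂ) : ℂ := s * (s - 1) * completedRiemannZeta₀ s + 1

noncomputable def A : ℂ := Real.pi / 3 - 1

noncomputable def f1 (s : ℂ) : ℂ :=
  (s - 1) * ((s - 1) * (3 * s - 2) * (A * s - A + 1) * chi (s + 1) * chi (3 * s)
    - (s + 1) * (s - 2) * chi s * chi (3 * s - 1)
    - 2 * (s - 1) * (s - 2) * chi s * chi (3 * s))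

noncomputable def f2 (s : ℂ) : ℂ :=
  (s - 2) * ((A * s + 3) * (s - 1) ^ 2 * chi (s + 2)
    - 2 * (s - 1) * (s - 3) * chi (s + 1)
    - (s + 2) * (s - 3) * chi s)

noncomputable def Z1 (s : ℂ) : ℂ := chi (2 * s) * f1 s - chi (2 * s - 1) * f1 (1 - s)

noncomputable def Z2 (s : ℂ) : ℂ := chi (2 * s) * f2 s - chi (2 * s - 1) * f2 (1 - s)

/-! Put `s = 1 - w`. From `χ(1 - s) = χ(s)`, `Γℝ(w) = Γℝ(w - 2)(w - 2)/(2π)` and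
`Γℝ(w - 1) = Γℝ(w) B((w - 1)/2, 1/2)` one gets
`f₂(1 - w) = (w + 1) w⁴ Γℝ(w) Φ(1/w, ζ(w), ζ(w - 1), ζ(w - 2), B((w - 1)/2, 1/2))`
with an explicit polynomial `Φ = f2Normalized`. As `Re w → ∞`, uniformly in `Im w`, dominated
convergence gives `ζ(w) → 1` (for the Dirichlet series) and `B(u, 1/2) → 0` (for the Beta
integral), so the last factor tends to `Φ(0, 1, 1, 1, 0) = 1 + 2πA`, positive as `π > 3`. -/

open Filter Topology
open scoped Real

lemma chi_one_sub (s : ℂ) : chi (1 - s) = chi s := by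
  rw [chi, chi, completedRiemannZeta₀_one_sub]
  ring

lemma chi_eq_mul_Gammaℝ_mul_riemannZeta {w : ℂ} (hw : 0 < w.re) (hw₁ : w ≠ 1) :
    chi w = w * (w - 1) * Gammaℝ w * riemannZeta w := by
  have hw₀ : w ≠ 0 := fun h => by simp [h] at hw
  have hw₁' : 1 - w ≠ 0 := sub_ne_zero.mpr hw₁.symm
  have hΓ := Gammaℝ_ne_zero_of_re_pos hw
  rw [riemannZeta_def_of_ne_zero hw₀, completedRiemannZeta_eq, chi]
  field_simp
  ring

lemma Gammaℝ_sub_one_eq_mul_betaIntegral {w : ℂ} (hw : 1 < w.re) :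
    Gammaℝ (w - 1) = Gammaℝ w * betaIntegral ((w - 1) / 2) (1 / 2) := by
  have hre : 0 < ((w - 1) / 2).re := by simp; linarith
  have hπ : (π : ℂ) ≠ 0 := ofReal_ne_zero.mpr Real.pi_ne_zero
  have hβ := Gamma_mul_Gamma_eq_betaIntegral hre (by norm_num : (0 : ℝ) < (1 / 2 : ℂ).re)
  rw [show (w - 1) / 2 + 1 / 2 = w / 2 by ring, Gamma_one_half_eq] at hβ
  rw [Gammaℝ_def, Gammaℝ_def, mul_assoc, ← hβ, ← mul_assoc, mul_right_comm, ← cpow_add _ _ hπ]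
  ring_nf

lemma chi_sub_two_eq {w : ℂ} (hw : 3 < w.re) :
    chi (w - 2) = 2 * π * (w - 3) * Gammaℝ w * riemannZeta (w - 2) := by
  have hΓ := Gammaℝ_add_two (s := w - 2) (ne_of_apply_ne re (ne_of_gt (by simp; linarith)))
  rw [sub_add_cancel] at hΓ
  rw [chi_eq_mul_Gammaℝ_mul_riemannZeta (by simp; linarith)
    (ne_of_apply_ne re (ne_of_gt (by simp; linarith))), hΓ]
  field_simp
  ring

lemma chi_sub_one_eq {w : ℂ} (hw : 2 < w.re) :
    chi (w - 1) = (w - 1) * (w - 2) * Gammaℝ w * betaIntegral ((w - 1) / 2) (1 / 2)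
      * riemannZeta (w - 1) := by
  rw [chi_eq_mul_Gammaℝ_mul_riemannZeta (by simp; linarith)
    (ne_of_apply_ne re (ne_of_gt (by simp; linarith))),
    Gammaℝ_sub_one_eq_mul_betaIntegral (by linarith)]
  ring

noncomputable def f2Normalized (u z₀ z₁ z₂ b : ℂ) : ℂ :=
  (1 - 3 * u) * (1 + 2 * u) * (1 - u) * z₀ - 2 * π * (A * (u - 1) + 3 * u) * (1 - 3 * u) * z₂
    + 2 * (1 + 2 * u) * (1 - u) * (1 - 2 * u) * b * z₁

lemma f2_one_sub_eq {w : ℂ} (hw : 3 < w.re) :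
    f2 (1 - w) = (w + 1) * w ^ 4 * Gammaℝ w * f2Normalized w⁻¹ (riemannZeta w)
      (riemannZeta (w - 1)) (riemannZeta (w - 2)) (betaIntegral ((w - 1) / 2) (1 / 2)) := by
  have hw₀ : w ≠ 0 := ne_of_apply_ne re (ne_of_gt (by simp; linarith))
  rw [f2, show 1 - w + 2 = 1 - (w - 2) by ring, show 1 - w + 1 = 1 - (w - 1) by ring,
    chi_one_sub, chi_one_sub, chi_one_sub, chi_sub_two_eq hw, chi_sub_one_eq (by linarith),
    chi_eq_mul_Gammaℝ_mul_riemannZeta (by linarith)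
      (ne_of_apply_ne re (ne_of_gt (by simp; linarith))), f2Normalized]
  field_simp
  ring

lemma tendsto_inv_comap_re_atTop : Tendsto (·⁻¹) (comap re atTop) (𝓝 (0 : ℂ)) :=
  tendsto_inv₀_cobounded.comp <| tendsto_norm_atTop_iff_cobounded.mp <|
    tendsto_atTop_mono re_le_norm tendsto_comap

lemma tendsto_sub_comap_re_atTop (c : ℂ) :
    Tendsto (· - c) (comap re atTop) (comap re atTop) :=
  tendsto_comap_iff.mpr <| by
    simpa [Function.comp_def, sub_eq_add_neg] using
      tendsto_atTop_add_const_right _ (-c.re) tendsto_comap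

lemma norm_one_div_natCast_add_one_cpow (n : ℕ) (w : ℂ) :
    ‖1 / ((n : ℂ) + 1) ^ w‖ = ((n : ℝ) + 1)⁻¹ ^ w.re := by
  rw [norm_div, norm_one, show (n : ℂ) + 1 = ((n + 1 : ℝ) : ℂ) by push_cast; rfl,
    norm_cpow_eq_rpow_re_of_pos (by positivity), Real.inv_rpow (by positivity), one_div]

lemma tendsto_riemannZeta_comap_re_atTop : Tendsto riemannZeta (comap re atTop) (𝓝 1) := by
  have h_term (n : ℕ) : Tendsto (fun w : ℂ => 1 / ((n : ℂ) + 1) ^ w) (comap re atTop)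
      (𝓝 (if n = 0 then 1 else 0)) := by
    rcases n.eq_zero_or_pos with rfl | hn
    · simpa using tendsto_const_nhds
    · rw [if_neg hn.ne', tendsto_zero_iff_norm_tendsto_zero]
      simp only [norm_one_div_natCast_add_one_cpow]
      exact (tendsto_rpow_atTop_of_base_lt_one _ (neg_one_lt_zero.trans (by positivity))
        (inv_lt_one_of_one_lt₀ (by norm_cast; omega))).comp tendsto_comap
  have h_bound : ∀ᶠ w : ℂ in comap re atTop, ∀ n : ℕ,
      ‖1 / ((n : ℂ) + 1) ^ w‖ ≤ ((n : ℝ) + 1)⁻¹ ^ 2 := by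
    filter_upwards [tendsto_comap.eventually_ge_atTop 2] with w hw n
    rw [norm_one_div_natCast_add_one_cpow, ← Real.rpow_two]
    exact Real.rpow_le_rpow_of_exponent_ge (by positivity) (inv_le_one_of_one_le₀ (by simp)) hw
  have h_sum : Summable fun n : ℕ => ((n : ℝ) + 1)⁻¹ ^ 2 := by
    simpa [inv_pow] using (summable_nat_add_iff 1).mpr (Real.summable_nat_pow_inv.mpr one_lt_two)
  have h := tendsto_tsum_of_dominated_convergence h_sum h_term h_bound
  rw [tsum_ite_eq] at h
  refine h.congr' ?_
  filter_upwards [tendsto_comap.eventually_gt_atTop 1] with w hw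
  exact (zeta_eq_tsum_one_div_nat_add_one_cpow hw).symm

open MeasureTheory in
open scoped Interval in
lemma tendsto_betaIntegral_comap_re_atTop {v : ℂ} (hv : 0 < v.re) :
    Tendsto (fun u => betaIntegral u v) (comap re atTop) (𝓝 0) := by
  have h_meas : ∀ᶠ u : ℂ in comap re atTop, AEStronglyMeasurable
      (fun x : ℝ => (x : ℂ) ^ (u - 1) * (1 - (x : ℂ)) ^ (v - 1)) (volume.restrict (Ι 0 1)) := by
    filter_upwards [tendsto_comap.eventually_gt_atTop 0] with u hu
    exact (betaIntegral_convergent hu hv).def'.aestronglyMeasurable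
  have h_bound : ∀ᶠ u : ℂ in comap re atTop, ∀ᵐ x : ℝ, x ∈ Ι 0 1 →
      ‖(x : ℂ) ^ (u - 1) * (1 - (x : ℂ)) ^ (v - 1)‖ ≤ ‖(1 - (x : ℂ)) ^ (v - 1)‖ := by
    filter_upwards [tendsto_comap.eventually_ge_atTop 1] with u hu
    refine .of_forall fun x hx => ?_
    rw [Set.uIoc_of_le zero_le_one] at hx
    rw [norm_mul, norm_cpow_eq_rpow_re_of_pos hx.1]
    exact mul_le_of_le_one_left (norm_nonneg _)
      (Real.rpow_le_one hx.1.le hx.2 (by simp; linarith))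
  have h_int : IntervalIntegrable (fun x : ℝ => ‖(1 - (x : ℂ)) ^ (v - 1)‖) volume 0 1 := by
    simpa using (betaIntegral_convergent (u := 1) (by simp) hv).norm
  have h_lim : ∀ᵐ x : ℝ, x ∈ Ι 0 1 → Tendsto
      (fun u : ℂ => (x : ℂ) ^ (u - 1) * (1 - (x : ℂ)) ^ (v - 1)) (comap re atTop) (𝓝 0) := by
    filter_upwards [volume.ae_ne 1] with x hx₁ hx
    rw [Set.uIoc_of_le zero_le_one] at hx
    rw [← zero_mul ((1 - (x : ℂ)) ^ (v - 1))]
    refine Tendsto.mul_const _ (tendsto_zero_iff_norm_tendsto_zero.mpr ?_)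
    simp only [norm_cpow_eq_rpow_re_of_pos hx.1, sub_re, one_re]
    exact (tendsto_rpow_atTop_of_base_lt_one x (by linarith [hx.1])
      (lt_of_le_of_ne hx.2 hx₁)).comp (tendsto_atTop_add_const_right _ (-1) tendsto_comap)
  simpa [betaIntegral] using
    intervalIntegral.tendsto_integral_filter_of_dominated_convergence _ h_meas h_bound h_int h_lim

lemma one_add_two_mul_pi_mul_A_ne_zero : 1 + 2 * π * A ≠ 0 := by
  have h : (0 : ℝ) < 1 + 2 * π * (π / 3 - 1) := by nlinarith [Real.pi_gt_three]
  rw [A]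
  exact_mod_cast h.ne'

lemma tendsto_f2Normalized_comap_re_atTop :
    Tendsto (fun w => f2Normalized w⁻¹ (riemannZeta w) (riemannZeta (w - 1))
      (riemannZeta (w - 2)) (betaIntegral ((w - 1) / 2) (1 / 2)))
      (comap re atTop) (𝓝 (1 + 2 * π * A)) := by
  have h_cont : Continuous fun p : ℂ × ℂ × ℂ × ℂ × ℂ =>
      f2Normalized p.1 p.2.1 p.2.2.1 p.2.2.2.1 p.2.2.2.2 := by
    unfold f2Normalized; fun_prop
  have h_half : Tendsto (fun w : ℂ => (w - 1) / 2) (comap re atTop) (comap re atTop) :=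
    tendsto_comap_iff.mpr <| by
      simpa [Function.comp_def, sub_eq_add_neg] using
        (tendsto_atTop_add_const_right _ (-1) tendsto_comap).atTop_div_const two_pos
  have h_zeta (c : ℂ) := tendsto_riemannZeta_comap_re_atTop.comp (tendsto_sub_comap_re_atTop c)
  have h := (h_cont.tendsto (0, 1, 1, 1, 0)).comp <|
    tendsto_inv_comap_re_atTop.prodMk_nhds <| tendsto_riemannZeta_comap_re_atTop.prodMk_nhds <|
      (h_zeta 1).prodMk_nhds <| (h_zeta 2).prodMk_nhds <|
        (tendsto_betaIntegral_comap_re_atTop (v := 1 / 2) (by norm_num)).comp h_half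
  rwa [show f2Normalized 0 1 1 1 0 = 1 + 2 * π * A by simp only [f2Normalized]; ring] at h

lemma f2_one_sub_eventually_ne_zero : ∀ᶠ w in comap re atTop, f2 (1 - w) ≠ 0 := by
  filter_upwards [tendsto_f2Normalized_comap_re_atTop.eventually_ne
    one_add_two_mul_pi_mul_A_ne_zero, tendsto_comap.eventually_gt_atTop 3] with w hf hw
  have hw₀ : w ≠ 0 := ne_of_apply_ne re (ne_of_gt (by simp; linarith))
  have hw₁ : w + 1 ≠ 0 := ne_of_apply_ne re (ne_of_gt (by simp; linarith))
  rw [f2_one_sub_eq hw]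
  exact mul_ne_zero (mul_ne_zero (mul_ne_zero hw₁ (pow_ne_zero 4 hw₀))
    (Gammaℝ_ne_zero_of_re_pos (by linarith))) hf

theorem f2_no_zero_left :
    ∃ σ₂ : ℝ, ∀ s : ℂ, s.re < σ₂ → f2 s ≠ 0 := by
  obtain ⟨σ, hσ⟩ := eventually_atTop.mp (eventually_comap.mp f2_one_sub_eventually_ne_zero)
  refine ⟨1 - σ, fun s hs => ?_⟩
  simpa using hσ (1 - s).re (by simp; linarith) (1 - s) rfl
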